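/- Let P and Q be projective measurements on a finite-dimensional complex Hilbert space, and let ρ = Σ_{i=1}^r π_i |ψ_i⟩⟨ψ_i| be a mixed state (π_i > 0, Σ π_i = 1, ψ_i unit vectors). Then H(P,ρ) + H(Q,ρ) ≥ -2 log₂ max_{i,j} ‖P_i Q_j‖, where H(X,ρ) = -Σ_k Tr(ρ X_k) log₂ Tr(ρ X_k). -/

import Mathlib

/-!
For a unit vector `ψ` put `p k = ‖P k ψ‖²`, `q l = ‖Q l ψ‖²` and let `c` bound every `‖P k Q l‖`.
With `e_a(z) = (a (1 + z) - 1) / 2`, the entire function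
`G z = ∑ k l, p k ^ e_a(z) * q l ^ e_b(z) * ⟪Q l ψ, P k ψ⟫` is an inner product of two vectors that are orthogonal sums of the `P k ψ` and the `Q l ψ`, so on `Re z = 0` it is at
most `(∑ q^b)^(1/2) (∑ p^a)^(1/2)`; on `Re z = 1` each term is bounded through `‖P k Q l‖ ≤ c`,
giving `c (∑ q^b)(∑ p^a)`; and for `a = 1/(1+s)`, `b = 1/(1-s)` its value at `z = s` is `∑ q^b`.
Hadamard's three lines theorem yields the Rényi uncertainty relation
`(1 - s) log ∑ q^(1/(1-s)) ≤ 2 s log c + (1 + s) log ∑ p^(1/(1+s))` for `0 < s < 1`, an equality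
at `s = 0`; comparing derivatives at `s = 0` gives the Maassen–Uffink bound
`H(p) + H(q) ≥ -2 log c`. The bound passes to mixtures because the Shannon entropy is concave.
-/

open Real Filter Topology
open scoped InnerProductSpace ComplexConjugate

noncomputable def shannonEntropy {ι : Type*} [Fintype ι] (p : ι → ℝ) : ℝ := ∑ i, negMulLog (p i)

lemma neg_sum_mul_logb_two_eq_shannonEntropy_div {ι : Type*} [Fintype ι] (p : ι → ℝ) :
    -∑ i, p i * logb 2 (p i) = shannonEntropy p / log 2 := by
  simp only [shannonEntropy, negMulLog, logb, Finset.sum_div, ← Finset.sum_neg_distrib]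
  exact Finset.sum_congr rfl fun i _ => by ring

lemma sum_mul_shannonEntropy_le {ι κ : Type*} [Fintype ι] [Fintype κ] {w : ι → ℝ}
    (hw : ∀ i, 0 ≤ w i) (hw1 : ∑ i, w i = 1) {x : ι → κ → ℝ} (hx : ∀ i k, 0 ≤ x i k) :
    ∑ i, w i * shannonEntropy (x i) ≤ shannonEntropy fun k => ∑ i, w i * x i k := by
  simp only [shannonEntropy, Finset.mul_sum]
  rw [Finset.sum_comm]
  refine Finset.sum_le_sum fun k _ => ?_
  simpa [smul_eq_mul] using concaveOn_negMulLog.le_map_sum (fun i _ => hw i) hw1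
    (fun i _ => Set.mem_Ici.mpr (hx i k))

lemma sum_rpow_pos {ι : Type*} [Fintype ι] {x : ι → ℝ} (hx : ∀ i, 0 ≤ x i)
    (hsum : ∑ i, x i = 1) (b : ℝ) : 0 < ∑ i, x i ^ b := by
  obtain ⟨i, -, hi⟩ := Finset.exists_ne_zero_of_sum_ne_zero (hsum ▸ one_ne_zero)
  exact Finset.sum_pos' (fun j _ => rpow_nonneg (hx j) b)
    ⟨i, Finset.mem_univ i, rpow_pos_of_pos ((hx i).lt_of_ne' hi) b⟩

lemma HasDerivAt.nonpos_of_eventually_le_right {f : ℝ → ℝ} {f' a : ℝ} (hf : HasDerivAt f f' a)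
    (h : ∀ᶠ x in 𝓝[>] a, f x ≤ f a) : f' ≤ 0 := by
  refine le_of_tendsto ((hasDerivWithinAt_iff_tendsto_slope' (s := Set.Ioi a) (lt_irrefl a)).mp
    hf.hasDerivWithinAt) ?_
  filter_upwards [h, self_mem_nhdsWithin] with x hx (hax : a < x)
  rw [slope_def_field]
  exact div_nonpos_of_nonpos_of_nonneg (sub_nonpos.mpr hx) (sub_nonneg.mpr hax.le)

lemma hasDerivAt_rpow_one_sub_inv {x : ℝ} (hx : 0 ≤ x) :
    HasDerivAt (fun t : ℝ => x ^ (1 - t)⁻¹) (x * log x) 0 := by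
  rcases hx.eq_or_lt with rfl | hx
  · refine (hasDerivAt_const (0 : ℝ) (0 : ℝ)).congr_of_eventuallyEq ?_ |>.congr_deriv (by simp)
    filter_upwards [eventually_ne_nhds (show (0 : ℝ) ≠ 1 by norm_num)] with t ht
    exact zero_rpow (inv_ne_zero (sub_ne_zero.mpr ht.symm))
  · have h : HasDerivAt (fun t : ℝ => (1 - t)⁻¹) 1 0 := by
      simpa using ((hasDerivAt_id (0 : ℝ)).const_sub 1).fun_inv (by norm_num)
    simpa [mul_comm] using h.const_rpow hx

lemma hasDerivAt_one_sub_mul_log_sum_rpow {ι : Type*} [Fintype ι] {x : ι → ℝ}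
    (hx : ∀ i, 0 ≤ x i) (hsum : ∑ i, x i = 1) :
    HasDerivAt (fun t : ℝ => (1 - t) * log (∑ i, x i ^ (1 - t)⁻¹)) (-shannonEntropy x) 0 := by
  have hS : HasDerivAt (fun t : ℝ => ∑ i, x i ^ (1 - t)⁻¹) (∑ i, x i * log (x i)) 0 :=
    HasDerivAt.fun_sum fun i _ => hasDerivAt_rpow_one_sub_inv (hx i)
  have hlog := hS.log (by simp [hsum])
  refine (((hasDerivAt_id (0 : ℝ)).const_sub 1).fun_mul hlog).congr_deriv ?_
  simp [hsum, shannonEntropy, negMulLog_eq_neg]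

namespace IsStarProjection

variable {𝕜 E : Type*} [RCLike 𝕜] [NormedAddCommGroup E] [InnerProductSpace 𝕜 E] [CompleteSpace E]
  {T S : E →L[𝕜] E}

lemma apply_apply (hT : IsStarProjection T) (x : E) : T (T x) = T x :=
  congrArg (· x) hT.isIdempotentElem.eq

lemma inner_apply_left_eq (hT : IsStarProjection T) (x y : E) : ⟪T x, y⟫_𝕜 = ⟪T x, T y⟫_𝕜 := by
  rw [← ContinuousLinearMap.adjoint_inner_left,
    ContinuousLinearMap.isSelfAdjoint_iff'.mp hT.isSelfAdjoint, hT.apply_apply]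

lemma inner_apply_right_eq (hT : IsStarProjection T) (x y : E) : ⟪x, T y⟫_𝕜 = ⟪T x, T y⟫_𝕜 := by
  rw [← inner_conj_symm, hT.inner_apply_left_eq, inner_conj_symm]

lemma inner_apply_self (hT : IsStarProjection T) (x : E) : ⟪x, T x⟫_𝕜 = (‖T x‖ : 𝕜) ^ 2 := by
  rw [hT.inner_apply_right_eq, inner_self_eq_norm_sq_to_K]

lemma norm_inner_apply_apply_le (hT : IsStarProjection T) (hS : IsStarProjection S) (x y : E) :
    ‖⟪S x, T y⟫_𝕜‖ ≤ ‖T ∘L S‖ * ‖S x‖ * ‖T y‖ := by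
  have h : ⟪S x, T y⟫_𝕜 = ⟪(T ∘L S) (S x), T y⟫_𝕜 := by
    rw [hT.inner_apply_right_eq, ContinuousLinearMap.comp_apply, hS.apply_apply]
  rw [h]
  calc ‖⟪(T ∘L S) (S x), T y⟫_𝕜‖ ≤ ‖(T ∘L S) (S x)‖ * ‖T y‖ := norm_inner_le_norm _ _
    _ ≤ ‖T ∘L S‖ * ‖S x‖ * ‖T y‖ := by gcongr; exact (T ∘L S).le_opNorm _

end IsStarProjection

structure IsProjectiveMeasurement {𝕜 E ι : Type*} [RCLike 𝕜] [NormedAddCommGroup E]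
    [InnerProductSpace 𝕜 E] [CompleteSpace E] [Fintype ι] (P : ι → E →L[𝕜] E) : Prop where
  isStarProjection : ∀ i, IsStarProjection (P i)
  sum_eq_one : ∑ i, P i = 1

namespace IsProjectiveMeasurement

variable {𝕜 E ι κ : Type*} [RCLike 𝕜] [NormedAddCommGroup E] [InnerProductSpace 𝕜 E]
  [CompleteSpace E] [Fintype ι] [Fintype κ] {P : ι → E →L[𝕜] E} {Q : κ → E →L[𝕜] E}

lemma sum_apply (hP : IsProjectiveMeasurement P) (x : E) : ∑ i, P i x = x := by
  rw [← _root_.sum_apply, hP.sum_eq_one, one_apply_eq_self]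

lemma sum_norm_sq_apply (hP : IsProjectiveMeasurement P) (x : E) :
    ∑ i, ‖P i x‖ ^ 2 = ‖x‖ ^ 2 := by
  have h : ∑ i, (‖P i x‖ : 𝕜) ^ 2 = (‖x‖ : 𝕜) ^ 2 := by
    simp_rw [← (hP.isStarProjection _).inner_apply_self, ← inner_sum, hP.sum_apply,
      inner_self_eq_norm_sq_to_K]
  exact_mod_cast h

lemma apply_apply_of_ne (hP : IsProjectiveMeasurement P) {i j : ι} (hij : i ≠ j) (x : E) :
    P i (P j x) = 0 := by
  classical
  have hsum := hP.sum_norm_sq_apply (P j x)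
  rw [← Finset.add_sum_erase _ _ (Finset.mem_univ j), (hP.isStarProjection j).apply_apply,
    add_eq_left, Finset.sum_eq_zero_iff_of_nonneg (fun _ _ => sq_nonneg _)] at hsum
  simpa using hsum i (Finset.mem_erase.mpr ⟨hij, Finset.mem_univ i⟩)

lemma inner_apply_apply_of_ne (hP : IsProjectiveMeasurement P) {i j : ι} (hij : i ≠ j)
    (x y : E) : ⟪P i x, P j y⟫_𝕜 = 0 := by
  rw [(hP.isStarProjection i).inner_apply_left_eq, hP.apply_apply_of_ne hij, inner_zero_right]

lemma norm_sum_smul_apply_sq (hP : IsProjectiveMeasurement P) (w : ι → 𝕜) (x : E) :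
    ‖∑ i, w i • P i x‖ ^ 2 = ∑ i, (‖w i‖ * ‖P i x‖) ^ 2 := by
  classical
  have h : ⟪∑ i, w i • P i x, ∑ i, w i • P i x⟫_𝕜 = ∑ i, ((‖w i‖ * ‖P i x‖ : ℝ) : 𝕜) ^ 2 := by
    simp_rw [sum_inner, inner_sum, inner_smul_left, inner_smul_right]
    refine Finset.sum_congr rfl fun i _ => ?_
    rw [Finset.sum_eq_single i (fun j _ hji => by rw [hP.inner_apply_apply_of_ne hji.symm,
      mul_zero, mul_zero]) (by simp), inner_self_eq_norm_sq_to_K, ← mul_assoc,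
      RCLike.conj_mul]
    push_cast
    ring
  rw [inner_self_eq_norm_sq_to_K] at h
  exact_mod_cast h

lemma sum_sum_comp (hP : IsProjectiveMeasurement P) (hQ : IsProjectiveMeasurement Q) :
    ∑ i, ∑ j, P i ∘L Q j = 1 := by
  simp_rw [← ContinuousLinearMap.mul_def, ← Finset.sum_mul_sum, hP.sum_eq_one, hQ.sum_eq_one,
    mul_one]

lemma exists_comp_ne_zero [Nontrivial E] (hP : IsProjectiveMeasurement P)
    (hQ : IsProjectiveMeasurement Q) : ∃ i j, P i ∘L Q j ≠ 0 := by
  by_contra! h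
  simpa [h] using hP.sum_sum_comp hQ

end IsProjectiveMeasurement

section Interpolation

-- On `Re z = 0` the vector `∑ k, p k ^ e_a(z) • P k ψ` has squared norm `∑ p^a`; on `Re z = 1`
-- the weight `p k ^ e_a(z)` has modulus `p k ^ a / √(p k)`; and `e_a` vanishes at `z = 1/a - 1`.
noncomputable def stripExponent (a : ℝ) (z : ℂ) : ℂ := (a * (1 + z) - 1) / 2

lemma stripExponent_re (a : ℝ) (z : ℂ) : (stripExponent a z).re = (a * (1 + z.re) - 1) / 2 := by
  simp [stripExponent]

lemma norm_cpow_stripExponent_mul {y a : ℝ} {z : ℂ} (hy : 0 ≤ y) (h : a * (1 + z.re) ≠ 0) :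
    ‖((y ^ 2 : ℝ) : ℂ) ^ stripExponent a z‖ * y = (y ^ 2) ^ (a * (1 + z.re) / 2) := by
  rcases hy.eq_or_lt with rfl | hy
  · simp [zero_rpow (div_ne_zero h two_ne_zero)]
  · rw [Complex.norm_cpow_eq_rpow_re_of_pos (by positivity), stripExponent_re]
    conv_lhs => rhs; rw [← sqrt_sq hy.le, sqrt_eq_rpow]
    rw [← rpow_add (by positivity)]
    ring_nf

variable {H ι κ : Type*} [NormedAddCommGroup H] [InnerProductSpace ℂ H]
  [Fintype ι] [Fintype κ] {P : ι → H →L[ℂ] H} {Q : κ → H →L[ℂ] H} {ψ : H} {a b c : ℝ} {z : ℂ}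

noncomputable def interpolant (P : ι → H →L[ℂ] H) (Q : κ → H →L[ℂ] H) (ψ : H) (a b : ℝ)
    (z : ℂ) : ℂ :=
  ∑ k, ∑ l, ((‖P k ψ‖ ^ 2 : ℝ) : ℂ) ^ stripExponent a z *
    ((‖Q l ψ‖ ^ 2 : ℝ) : ℂ) ^ stripExponent b z * ⟪Q l ψ, P k ψ⟫_ℂ

lemma differentiable_interpolant : Differentiable ℂ (interpolant P Q ψ a b) := by
  refine Differentiable.fun_sum fun k _ => Differentiable.fun_sum fun l _ => ?_
  by_cases h : ⟪Q l ψ, P k ψ⟫_ℂ = 0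
  · simp [h]
  have hexp (x : ℝ) : Differentiable ℂ (stripExponent x) := by
    unfold stripExponent; fun_prop
  have hP : ((‖P k ψ‖ ^ 2 : ℝ) : ℂ) ≠ 0 := by
    have : P k ψ ≠ 0 := fun h' => h (by simp [h'])
    exact_mod_cast pow_ne_zero 2 (norm_ne_zero_iff.mpr this)
  have hQ : ((‖Q l ψ‖ ^ 2 : ℝ) : ℂ) ≠ 0 := by
    have : Q l ψ ≠ 0 := fun h' => h (by simp [h'])
    exact_mod_cast pow_ne_zero 2 (norm_ne_zero_iff.mpr this)
  exact (((hexp a).const_cpow (Or.inl hP)).mul ((hexp b).const_cpow (Or.inl hQ))).mul_const _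

lemma interpolant_eq_inner (z : ℂ) :
    interpolant P Q ψ a b z = ⟪∑ l, conj (((‖Q l ψ‖ ^ 2 : ℝ) : ℂ) ^ stripExponent b z) • Q l ψ,
      ∑ k, ((‖P k ψ‖ ^ 2 : ℝ) : ℂ) ^ stripExponent a z • P k ψ⟫_ℂ := by
  simp_rw [interpolant, sum_inner, inner_sum, inner_smul_left, inner_smul_right, Complex.conj_conj]
  rw [Finset.sum_comm]
  exact Finset.sum_congr rfl fun _ _ => Finset.sum_congr rfl fun _ _ => by ring

variable [CompleteSpace H]

lemma IsProjectiveMeasurement.sum_norm_cpow_stripExponent_mul_sq_le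
    (hP : IsProjectiveMeasurement P) (hψ : ‖ψ‖ = 1) (ha : 0 < a) (hz : 0 ≤ z.re) :
    ∑ k, (‖((‖P k ψ‖ ^ 2 : ℝ) : ℂ) ^ stripExponent a z‖ * ‖P k ψ‖) ^ 2 ≤
      ∑ k, (‖P k ψ‖ ^ 2) ^ a := by
  have hsum := hP.sum_norm_sq_apply ψ
  rw [hψ, one_pow] at hsum
  refine Finset.sum_le_sum fun k _ => ?_
  have hle : ‖P k ψ‖ ^ 2 ≤ 1 :=
    hsum ▸ Finset.single_le_sum (fun j _ => sq_nonneg ‖P j ψ‖) (Finset.mem_univ k)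
  rw [norm_cpow_stripExponent_mul (norm_nonneg _) (by positivity), ← rpow_mul_natCast
    (by positivity)]
  exact rpow_le_rpow_of_exponent_ge' (by positivity) hle ha.le (by push_cast; nlinarith)

lemma norm_interpolant_le_of_re_nonneg (hP : IsProjectiveMeasurement P)
    (hQ : IsProjectiveMeasurement Q) (hψ : ‖ψ‖ = 1) (ha : 0 < a) (hb : 0 < b) (hz : 0 ≤ z.re) :
    ‖interpolant P Q ψ a b z‖ ≤ √(∑ l, (‖Q l ψ‖ ^ 2) ^ b) * √(∑ k, (‖P k ψ‖ ^ 2) ^ a) := by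
  rw [interpolant_eq_inner]
  refine (norm_inner_le_norm _ _).trans (mul_le_mul ?_ ?_ (norm_nonneg _) (sqrt_nonneg _))
  · refine le_sqrt_of_sq_le ?_
    rw [hQ.norm_sum_smul_apply_sq]
    simpa only [Complex.norm_conj] using hQ.sum_norm_cpow_stripExponent_mul_sq_le hψ hb hz
  · refine le_sqrt_of_sq_le ?_
    rw [hP.norm_sum_smul_apply_sq]
    exact hP.sum_norm_cpow_stripExponent_mul_sq_le hψ ha hz

lemma norm_interpolant_le_of_re_eq_one (hP : ∀ k, IsStarProjection (P k))
    (hQ : ∀ l, IsStarProjection (Q l)) (hc : ∀ k l, ‖P k ∘L Q l‖ ≤ c) (ha : 0 < a) (hb : 0 < b)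
    (hz : z.re = 1) :
    ‖interpolant P Q ψ a b z‖ ≤ c * (∑ l, (‖Q l ψ‖ ^ 2) ^ b) * ∑ k, (‖P k ψ‖ ^ 2) ^ a := by
  have hpow {x : ℝ} (hx : 0 < x) (y : ℝ) (hy : 0 ≤ y) :
      ‖((y ^ 2 : ℝ) : ℂ) ^ stripExponent x z‖ * y = (y ^ 2) ^ x := by
    rw [norm_cpow_stripExponent_mul hy (by rw [hz]; positivity), hz]
    ring_nf
  calc ‖interpolant P Q ψ a b z‖
      ≤ ∑ k, ∑ l, ‖((‖P k ψ‖ ^ 2 : ℝ) : ℂ) ^ stripExponent a z‖ *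
          ‖((‖Q l ψ‖ ^ 2 : ℝ) : ℂ) ^ stripExponent b z‖ * (c * ‖Q l ψ‖ * ‖P k ψ‖) := by
        refine (norm_sum_le _ _).trans (Finset.sum_le_sum fun k _ => ?_)
        refine (norm_sum_le _ _).trans (Finset.sum_le_sum fun l _ => ?_)
        rw [norm_mul, norm_mul]
        gcongr
        exact ((hP k).norm_inner_apply_apply_le (hQ l) _ _).trans (by gcongr; exact hc k l)
    _ = c * (∑ l, (‖Q l ψ‖ ^ 2) ^ b) * ∑ k, (‖P k ψ‖ ^ 2) ^ a := by
        simp_rw [← hpow ha _ (norm_nonneg _), ← hpow hb _ (norm_nonneg _), Finset.mul_sum,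
          Finset.sum_mul]
        exact Finset.sum_congr rfl fun _ _ => Finset.sum_congr rfl fun _ _ => by ring

lemma interpolant_ofReal (hP : IsProjectiveMeasurement P) (hQ : ∀ l, IsStarProjection (Q l))
    {s : ℝ} (hs0 : -1 < s) (hs1 : s < 1) :
    interpolant P Q ψ (1 + s)⁻¹ (1 - s)⁻¹ s = ((∑ l, (‖Q l ψ‖ ^ 2) ^ (1 - s)⁻¹ : ℝ) : ℂ) := by
  have hP0 : stripExponent (1 + s)⁻¹ s = 0 := by
    have : (1 + (s : ℂ)) ≠ 0 := by exact_mod_cast (by linarith : 1 + s ≠ 0)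
    simp only [stripExponent]
    push_cast
    rw [inv_mul_cancel₀ this, sub_self, zero_div]
  have hQ0 : stripExponent (1 - s)⁻¹ s = ((s / (1 - s) : ℝ) : ℂ) := by
    have : (1 - (s : ℂ)) ≠ 0 := by exact_mod_cast (by linarith : 1 - s ≠ 0)
    simp only [stripExponent]
    push_cast
    field_simp
    ring
  have h1s : 1 - s ≠ 0 := by linarith
  have hexp : s / (1 - s) + 1 = (1 - s)⁻¹ := by rw [div_add_one h1s, add_sub_cancel, one_div]
  simp_rw [interpolant, hP0, hQ0, Complex.cpow_zero, one_mul]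
  rw [Finset.sum_comm, Complex.ofReal_sum]
  simp_rw [← Finset.mul_sum, ← inner_sum, hP.sum_apply]
  refine Finset.sum_congr rfl fun l _ => ?_
  rw [(hQ l).inner_apply_left_eq, inner_self_eq_norm_sq_to_K, ← hexp,
    rpow_add_one' (sq_nonneg _) (by rw [hexp]; exact inv_ne_zero h1s), Complex.ofReal_mul,
    Complex.ofReal_cpow (sq_nonneg _)]
  push_cast
  rfl

end Interpolation

namespace IsProjectiveMeasurement

variable {H ι κ : Type*} [NormedAddCommGroup H] [InnerProductSpace ℂ H] [CompleteSpace H]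
  [Fintype ι] [Fintype κ] {P : ι → H →L[ℂ] H} {Q : κ → H →L[ℂ] H} {c : ℝ}

theorem one_sub_mul_log_sum_rpow_le (hP : IsProjectiveMeasurement P)
    (hQ : IsProjectiveMeasurement Q) {ψ : H} (hψ : ‖ψ‖ = 1) (hc : ∀ k l, ‖P k ∘L Q l‖ ≤ c)
    {s : ℝ} (hs0 : 0 < s) (hs1 : s < 1) :
    (1 - s) * log (∑ l, (‖Q l ψ‖ ^ 2) ^ (1 - s)⁻¹) ≤
      2 * s * log c + (1 + s) * log (∑ k, (‖P k ψ‖ ^ 2) ^ (1 + s)⁻¹) := by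
  set A := ∑ l, (‖Q l ψ‖ ^ 2) ^ (1 - s)⁻¹
  set B := ∑ k, (‖P k ψ‖ ^ 2) ^ (1 + s)⁻¹
  have hA : 0 < A :=
    sum_rpow_pos (fun _ => sq_nonneg _) (by rw [hQ.sum_norm_sq_apply, hψ, one_pow]) _
  have hB : 0 < B :=
    sum_rpow_pos (fun _ => sq_nonneg _) (by rw [hP.sum_norm_sq_apply, hψ, one_pow]) _
  have hc0 : 0 < c := by
    have : Nontrivial H := nontrivial_of_ne ψ 0 (by rw [← norm_ne_zero_iff, hψ]; exact one_ne_zero)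
    obtain ⟨k, l, hkl⟩ := hP.exists_comp_ne_zero hQ
    exact (norm_pos_iff.mpr hkl).trans_le (hc k l)
  have ha : 0 < (1 + s)⁻¹ := inv_pos.mpr (by linarith)
  have hb : 0 < (1 - s)⁻¹ := inv_pos.mpr (by linarith)
  have hs : (s : ℂ) ∈ Complex.HadamardThreeLines.verticalClosedStrip 0 1 := by
    simp only [Complex.HadamardThreeLines.verticalClosedStrip, Set.mem_preimage, Complex.ofReal_re,
      Set.mem_Icc]
    constructor <;> linarith
  have h3 := Complex.HadamardThreeLines.norm_le_interp_of_mem_verticalClosedStrip₀₁'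
    (interpolant P Q ψ (1 + s)⁻¹ (1 - s)⁻¹) hs differentiable_interpolant.diffContOnCl
    ⟨_, Set.forall_mem_image.mpr fun z hz =>
      norm_interpolant_le_of_re_nonneg hP hQ hψ ha hb hz.1⟩
    (fun z hz => norm_interpolant_le_of_re_nonneg hP hQ hψ ha hb (le_of_eq hz.symm))
    (fun z hz =>
      norm_interpolant_le_of_re_eq_one hP.isStarProjection hQ.isStarProjection hc ha hb hz)
  rw [interpolant_ofReal hP hQ.isStarProjection (by linarith) hs1, Complex.norm_real,
    norm_of_nonneg hA.le, Complex.ofReal_re] at h3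
  have hlog := log_le_log hA h3
  rw [log_mul (by positivity) (by positivity), log_rpow (by positivity), log_rpow (by positivity),
    log_mul (by positivity) (by positivity), log_mul (by positivity) (by positivity),
    log_mul (by positivity) (by positivity), log_sqrt hA.le, log_sqrt hB.le] at hlog
  linarith

theorem neg_two_mul_log_le_shannonEntropy_add (hP : IsProjectiveMeasurement P)
    (hQ : IsProjectiveMeasurement Q) {ψ : H} (hψ : ‖ψ‖ = 1) (hc : ∀ k l, ‖P k ∘L Q l‖ ≤ c) :
    -2 * log c ≤ shannonEntropy (fun k => ‖P k ψ‖ ^ 2) + shannonEntropy (fun l => ‖Q l ψ‖ ^ 2) := by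
  have hp := hasDerivAt_one_sub_mul_log_sum_rpow (fun k => sq_nonneg ‖P k ψ‖)
    (by rw [hP.sum_norm_sq_apply, hψ, one_pow])
  have hq := hasDerivAt_one_sub_mul_log_sum_rpow (fun l => sq_nonneg ‖Q l ψ‖)
    (by rw [hQ.sum_norm_sq_apply, hψ, one_pow])
  -- With `R x t = (1 - t) * log ∑ i, x i ^ (1 - t)⁻¹`, the function
  -- `F t = R q t - R p (-t) - 2 t log c` vanishes at `0` and, by the Rényi relation, is
  -- nonpositive on `(0, 1)`, so `F' 0 ≤ 0`.
  have hp' := (neg_zero (G := ℝ) ▸ hp).comp (0 : ℝ) (hasDerivAt_neg (0 : ℝ))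
  have hF := (hq.sub hp').sub ((hasDerivAt_id (0 : ℝ)).const_mul (2 * log c))
  have hF' := hF.nonpos_of_eventually_le_right ?_
  · linarith
  filter_upwards [Ioo_mem_nhdsGT one_pos] with t ⟨ht0, ht1⟩
  have := hP.one_sub_mul_log_sum_rpow_le hQ hψ hc ht0 ht1
  simp only [Pi.sub_apply, Function.comp_apply, id, sub_neg_eq_add, sub_zero, neg_zero, inv_one,
    rpow_one, hP.sum_norm_sq_apply, hQ.sum_norm_sq_apply, hψ, one_pow, log_one, mul_zero]
  linarith

theorem neg_two_mul_log_le_shannonEntropy_mixture (hP : IsProjectiveMeasurement P)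
    (hQ : IsProjectiveMeasurement Q) (hc : ∀ k l, ‖P k ∘L Q l‖ ≤ c) {σ : Type*} [Fintype σ]
    {w : σ → ℝ} (hw : ∀ i, 0 ≤ w i) (hw1 : ∑ i, w i = 1) {ψ : σ → H} (hψ : ∀ i, ‖ψ i‖ = 1) :
    -2 * log c ≤ shannonEntropy (fun k => ∑ i, w i * ‖P k (ψ i)‖ ^ 2) +
      shannonEntropy (fun l => ∑ i, w i * ‖Q l (ψ i)‖ ^ 2) :=
  calc -2 * log c = ∑ i, w i * (-2 * log c) := by rw [← Finset.sum_mul, hw1, one_mul]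
    _ ≤ ∑ i, w i * (shannonEntropy (fun k => ‖P k (ψ i)‖ ^ 2) +
          shannonEntropy (fun l => ‖Q l (ψ i)‖ ^ 2)) :=
        Finset.sum_le_sum fun i _ => mul_le_mul_of_nonneg_left
          (hP.neg_two_mul_log_le_shannonEntropy_add hQ (hψ i) hc) (hw i)
    _ ≤ _ := by
        simp_rw [mul_add, Finset.sum_add_distrib]
        exact add_le_add (sum_mul_shannonEntropy_le hw hw1 fun _ _ => sq_nonneg _)
          (sum_mul_shannonEntropy_le hw hw1 fun _ _ => sq_nonneg _)

end IsProjectiveMeasurement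

theorem entropic_uncertainty_mixed_state
    {H : Type*} [NormedAddCommGroup H] [InnerProductSpace ℂ H] [FiniteDimensional ℂ H]
    {m n r : ℕ} (P : Fin m → H →L[ℂ] H) (Q : Fin n → H →L[ℂ] H)
    (hPsa : ∀ i, IsSelfAdjoint (P i)) (hPidem : ∀ i, P i ∘L P i = P i)
    (hQsa : ∀ j, IsSelfAdjoint (Q j)) (hQidem : ∀ j, Q j ∘L Q j = Q j)
    (hPsum : ∑ i, P i = 1) (hQsum : ∑ j, Q j = 1)
    (π' : Fin r → ℝ) (hπ : ∀ i, 0 < π' i) (hπsum : ∑ i, π' i = 1)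
    (ψ : Fin r → H) (hψ : ∀ i, ‖ψ i‖ = 1) :
    (-∑ k, (∑ i, π' i * (inner ℂ (ψ i) (P k (ψ i)) : ℂ).re) *
        Real.logb 2 (∑ i, π' i * (inner ℂ (ψ i) (P k (ψ i)) : ℂ).re)) +
      (-∑ l, (∑ i, π' i * (inner ℂ (ψ i) (Q l (ψ i)) : ℂ).re) *
        Real.logb 2 (∑ i, π' i * (inner ℂ (ψ i) (Q l (ψ i)) : ℂ).re)) ≥
    -2 * Real.logb 2 (sSup {s : ℝ | ∃ k l, s = ‖P k ∘L Q l‖}) := by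
  have hP : IsProjectiveMeasurement P := ⟨fun i => ⟨hPidem i, hPsa i⟩, hPsum⟩
  have hQ : IsProjectiveMeasurement Q := ⟨fun j => ⟨hQidem j, hQsa j⟩, hQsum⟩
  have hbdd : BddAbove {s : ℝ | ∃ k l, s = ‖P k ∘L Q l‖} :=
    ((Set.finite_range fun kl : Fin m × Fin n => ‖P kl.1 ∘L Q kl.2‖).subset
      (by rintro _ ⟨k, l, rfl⟩; exact ⟨(k, l), rfl⟩)).bddAbove
  have h := hP.neg_two_mul_log_le_shannonEntropy_mixture hQ
    (fun k l => le_csSup hbdd ⟨k, l, rfl⟩) (fun i => (hπ i).le) hπsum hψ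
  simp_rw [(hP.isStarProjection _).inner_apply_self, (hQ.isStarProjection _).inner_apply_self,
    ← RCLike.ofReal_pow, ← RCLike.re_to_complex, RCLike.ofReal_re,
    neg_sum_mul_logb_two_eq_shannonEntropy_div, logb, ge_iff_le, ← add_div, ← mul_div_assoc]
  exact div_le_div_of_nonneg_right h (log_nonneg one_le_two)
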